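/- arXiv:2304.01824 — 2 statements merged into one kernel-verified Lean document; each statement's English description precedes it below -/
import Mathlib

section
/- For any ν_1,…,ν_N ∈ ℂ and each j = 1,…,N, one has C(ν_j) B(ν_j − 1) |⇑⟩ = − a(ν_j) d(ν_j − 1) |⇑⟩, where a(λ) = ∏_{k=1}^N (λ − ν_k + 1) and d(λ) = ∏_{k=1}^N (λ − ν_k). (This is the action of the quantum determinant qdet T(ν_j) = D(ν_j)A(ν_j − 1) − C(ν_j)B(ν_j − 1) = a(ν_j) d(ν_j − 1)·Id on the vacuum, using a(ν_j − 1) = 0.) -/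
open scoped BigOperators
noncomputable section

namespace SixVertex

/-- A spin configuration of the `N`-site quantum chain: one spin (`0` = up, `1` = down)
at each site. Site `k` of the paper (k = 1,…,N) corresponds to index `k-1 : Fin N`. -/
abbrev Cfg (N : ℕ) := Fin N → Fin 2

/-- Operators on the quantum space `H = (ℂ²)^{⊗N}`, represented as matrices in the
standard (spin-configuration) basis. -/
abbrev Op (N : ℕ) := Matrix (Cfg N) (Cfg N) ℂ

/-- The operator acting as the 2×2 matrix `M` in the `k`-th tensor factor and as the
identity elsewhere. -/
def siteOp {N : ℕ} (k : Fin N) (M : Matrix (Fin 2) (Fin 2) ℂ) : Op N :=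
  Matrix.of fun s s' => if ∀ i, i ≠ k → s i = s' i then M (s k) (s' k) else 0

def piPlus : Matrix (Fin 2) (Fin 2) ℂ := !![1, 0; 0, 0]
def piMinus : Matrix (Fin 2) (Fin 2) ℂ := !![0, 0; 0, 1]
def sigmaPlus : Matrix (Fin 2) (Fin 2) ℂ := !![0, 1; 0, 0]
def sigmaMinus : Matrix (Fin 2) (Fin 2) ℂ := !![0, 0; 1, 0]

/-- Rational weight `a(λ,ν) = λ - ν + 1`. -/
def aW (l v : ℂ) : ℂ := l - v + 1
/-- Rational weight `b(λ,ν) = λ - ν`. -/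
def bW (l v : ℂ) : ℂ := l - v

/-- The L-operator at site `k` (a 2×2 matrix in the auxiliary space, with entries
operators on the quantum space); the weight `c` equals `1`. -/
def Lop {N : ℕ} (ν : Fin N → ℂ) (k : Fin N) (l : ℂ) :
    Matrix (Fin 2) (Fin 2) (Op N) :=
  !![aW l (ν k) • siteOp k piPlus + bW l (ν k) • siteOp k piMinus,
       siteOp k sigmaMinus;
     siteOp k sigmaPlus,
       bW l (ν k) • siteOp k piPlus + aW l (ν k) • siteOp k piMinus]

/-- The monodromy matrix `T(λ) = L_N(λ,ν_N) ⋯ L_1(λ,ν_1)`. -/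
def monodromy {N : ℕ} (ν : Fin N → ℂ) (l : ℂ) :
    Matrix (Fin 2) (Fin 2) (Op N) :=
  (((List.finRange N).reverse).map fun k => Lop ν k l).prod

/-- The operator `A(λ)`. -/
def Aop {N : ℕ} (ν : Fin N → ℂ) (l : ℂ) : Op N := monodromy ν l 0 0
/-- The operator `B(λ)`. -/
def Bop {N : ℕ} (ν : Fin N → ℂ) (l : ℂ) : Op N := monodromy ν l 0 1
/-- The operator `C(λ)`. -/
def Cop {N : ℕ} (ν : Fin N → ℂ) (l : ℂ) : Op N := monodromy ν l 1 0
/-- The operator `D(λ)`. -/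
def Dop {N : ℕ} (ν : Fin N → ℂ) (l : ℂ) : Op N := monodromy ν l 1 1

/-- The all-spins-up configuration. -/
def upCfg (N : ℕ) : Cfg N := fun _ => 0
/-- The all-spins-down configuration. -/
def downCfg (N : ℕ) : Cfg N := fun _ => 1

/-- The basis vector of `H` corresponding to a spin configuration `s`. -/
def basisVec {N : ℕ} (s : Cfg N) : Cfg N → ℂ := Pi.single s 1

/-- The all-spins-up vacuum vector `|⇑⟩`. -/
def upVec (N : ℕ) : Cfg N → ℂ := basisVec (upCfg N)
/-- The all-spins-down vector `|⇓⟩`. -/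
def downVec (N : ℕ) : Cfg N → ℂ := basisVec (downCfg N)

/-- The partition function of the six-vertex model with domain wall boundary conditions:
`Z_N(λ_1,…,λ_N) = ⟨⇓| B(λ_N) ⋯ B(λ_1) |⇑⟩`. -/
def Zfun (N : ℕ) (ν : Fin N → ℂ) (lam : Fin N → ℂ) : ℂ :=
  (((List.finRange N).reverse).map fun j => Bop ν (lam j)).prod (downCfg N) (upCfg N)

end SixVertex
end

/-!
On a basis state whose spins are up at all sites of a chain of L-operators, each L-operator is
upper triangular (its entry `σ⁺` kills an up spin), and L-operators at different sites commute.
Splitting the leftmost site `k` off the chain `k :: t` therefore gives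
`B(λ)|s⟩ = a(λ,ν_k) B_t(λ)|s⟩ + d_t(λ)|s with k flipped⟩`, and `C(μ)` flips `k` back with
coefficient `a_t(μ)`, where `a_t`, `d_t` are the products of the weights `a`, `b` over `t`.
By induction over the sites,
`C(λ+1) B(λ)|s⟩ = (∏ a(λ,ν_k)² - ∏ b(λ,ν_k) a(λ+1,ν_k)) |s⟩`, the recursion telescoping because
`a(λ,ν)² - b(λ,ν) a(λ+1,ν) = 1`. At `λ = ν_j - 1` the first product contains `a(ν_j - 1, ν_j) = 0`.
-/

open Matrix in
theorem Commute.mulVec_mulVec_comm {n R : Type*} [Fintype n] [CommSemiring R]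
    {A B : Matrix n n R} (h : Commute A B) (v : n → R) : A *ᵥ (B *ᵥ v) = B *ᵥ (A *ᵥ v) := by
  rw [mulVec_mulVec, h.eq, ← mulVec_mulVec]

namespace SixVertex

open Matrix Function

variable {N : ℕ}

theorem siteOp_mulVec_basisVec (k : Fin N) (M : Matrix (Fin 2) (Fin 2) ℂ) (s : Cfg N) :
    siteOp k M *ᵥ basisVec s = ∑ x, M x (s k) • basisVec (update s k x) := by
  funext t
  simp only [basisVec, mulVec_single_one, col_apply, siteOp, of_apply, Finset.sum_apply,
    Pi.smul_apply, Pi.single_apply, smul_eq_mul, mul_ite, mul_one, mul_zero]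
  by_cases ht : ∀ i, i ≠ k → t i = s i
  · have hx : ∀ x, t = update s k x ↔ x = t k := fun x => by
      constructor
      · rintro rfl; simp
      · rintro rfl; funext i; by_cases hi : i = k <;> simp [hi, ht]
    simp [if_pos ht, hx]
  · have hx : ∀ x, t ≠ update s k x := fun x h => ht fun i hi => by simp [h, hi]
    simp [if_neg ht, hx]

theorem siteOp_add (k : Fin N) (M M' : Matrix (Fin 2) (Fin 2) ℂ) :
    siteOp k (M + M') = siteOp k M + siteOp k M' := by
  ext s s'
  simp only [siteOp, of_apply, Matrix.add_apply]
  split_ifs <;> simp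

theorem siteOp_smul (k : Fin N) (c : ℂ) (M : Matrix (Fin 2) (Fin 2) ℂ) :
    siteOp k (c • M) = c • siteOp k M := by
  ext s s'
  by_cases h : ∀ i, i ≠ k → s i = s' i <;> simp [siteOp, h]

theorem commute_siteOp {k k' : Fin N} (h : k ≠ k') (M M' : Matrix (Fin 2) (Fin 2) ℂ) :
    Commute (siteOp k M) (siteOp k' M') := by
  refine ext_of_mulVec_single fun s => ?_
  change _ *ᵥ basisVec s = _ *ᵥ basisVec s
  simp only [← mulVec_mulVec, siteOp_mulVec_basisVec, mulVec_sum, mulVec_smul,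
    Finset.smul_sum, smul_smul, update_of_ne h, update_of_ne h.symm]
  rw [Finset.sum_comm]
  refine Finset.sum_congr rfl fun x _ => Finset.sum_congr rfl fun y _ => ?_
  rw [update_comm h, mul_comm]

variable (ν : Fin N → ℂ)

theorem exists_siteOp_eq_Lop (k : Fin N) (l : ℂ) (α β : Fin 2) :
    ∃ M, Lop ν k l α β = siteOp k M := by
  fin_cases α <;> fin_cases β
  · exact ⟨aW l (ν k) • piPlus + bW l (ν k) • piMinus, by simp [Lop, siteOp_add, siteOp_smul]⟩
  · exact ⟨sigmaMinus, by simp [Lop]⟩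
  · exact ⟨sigmaPlus, by simp [Lop]⟩
  · exact ⟨bW l (ν k) • piPlus + aW l (ν k) • piMinus, by simp [Lop, siteOp_add, siteOp_smul]⟩

theorem commute_Lop {k k' : Fin N} (h : k ≠ k') (l l' : ℂ) (α β γ δ : Fin 2) :
    Commute (Lop ν k l α β) (Lop ν k' l' γ δ) := by
  obtain ⟨M, hM⟩ := exists_siteOp_eq_Lop ν k l α β
  obtain ⟨M', hM'⟩ := exists_siteOp_eq_Lop ν k' l' γ δ
  rw [hM, hM']
  exact commute_siteOp h M M'

variable {ν}

section UpSpin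

variable {k : Fin N} {s : Cfg N} (hs : s k = 0) (l : ℂ)
include hs

private theorem update_zero_of_up : update s k 0 = s := update_eq_self_iff.mpr hs.symm

theorem Lop_zero_zero_mulVec_of_up : Lop ν k l 0 0 *ᵥ basisVec s = aW l (ν k) • basisVec s := by
  simp [Lop, add_mulVec, smul_mulVec, siteOp_mulVec_basisVec, Fin.sum_univ_two, hs, piPlus,
    piMinus, update_zero_of_up hs]

theorem Lop_zero_one_mulVec_of_up : Lop ν k l 0 1 *ᵥ basisVec s = basisVec (update s k 1) := by
  simp [Lop, siteOp_mulVec_basisVec, Fin.sum_univ_two, hs, sigmaMinus]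

theorem Lop_one_zero_mulVec_of_up : Lop ν k l 1 0 *ᵥ basisVec s = 0 := by
  simp [Lop, siteOp_mulVec_basisVec, Fin.sum_univ_two, hs, sigmaPlus]

theorem Lop_one_one_mulVec_of_up : Lop ν k l 1 1 *ᵥ basisVec s = bW l (ν k) • basisVec s := by
  simp [Lop, add_mulVec, smul_mulVec, siteOp_mulVec_basisVec, Fin.sum_univ_two, hs, piPlus,
    piMinus, update_zero_of_up hs]

theorem Lop_one_zero_mulVec_flip : Lop ν k l 1 0 *ᵥ basisVec (update s k 1) = basisVec s := by
  simp [Lop, siteOp_mulVec_basisVec, Fin.sum_univ_two, sigmaPlus, update_zero_of_up hs]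

end UpSpin

variable (ν) in
def partialMonodromy (t : List (Fin N)) (l : ℂ) : Matrix (Fin 2) (Fin 2) (Op N) :=
  (t.map fun k => Lop ν k l).prod

theorem partialMonodromy_cons (k : Fin N) (t : List (Fin N)) (l : ℂ) :
    partialMonodromy ν (k :: t) l = Lop ν k l * partialMonodromy ν t l :=
  List.prod_cons

theorem partialMonodromy_cons_apply_mulVec (k : Fin N) (t : List (Fin N)) (l : ℂ) (α β : Fin 2)
    (v : Cfg N → ℂ) :
    partialMonodromy ν (k :: t) l α β *ᵥ v =
      Lop ν k l α 0 *ᵥ (partialMonodromy ν t l 0 β *ᵥ v) +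
        Lop ν k l α 1 *ᵥ (partialMonodromy ν t l 1 β *ᵥ v) := by
  rw [partialMonodromy_cons, mul_apply, Fin.sum_univ_two, add_mulVec, mulVec_mulVec,
    mulVec_mulVec]

theorem commute_Lop_partialMonodromy {k : Fin N} {t : List (Fin N)} (hk : k ∉ t) (l l' : ℂ)
    (α β γ δ : Fin 2) : Commute (Lop ν k l α β) (partialMonodromy ν t l' γ δ) := by
  induction t generalizing γ δ with
  | nil =>
    simp only [partialMonodromy, List.map_nil, List.prod_nil, one_apply]
    split_ifs
    exacts [Commute.one_right _, Commute.zero_right _]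
  | cons k' t ih =>
    rw [List.mem_cons, not_or] at hk
    rw [partialMonodromy_cons, mul_apply]
    exact Commute.sum_right _ _ _ fun γ' _ =>
      (commute_Lop ν hk.1 l l' α β γ γ').mul_right (ih hk.2 γ' δ)

theorem partialMonodromy_mulVec_of_up {t : List (Fin N)} (ht : t.Nodup) (l : ℂ) {s : Cfg N}
    (hs : ∀ k ∈ t, s k = 0) :
    partialMonodromy ν t l 0 0 *ᵥ basisVec s = (t.map fun k => aW l (ν k)).prod • basisVec s ∧
    partialMonodromy ν t l 1 0 *ᵥ basisVec s = 0 ∧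
    partialMonodromy ν t l 1 1 *ᵥ basisVec s = (t.map fun k => bW l (ν k)).prod • basisVec s := by
  induction t with
  | nil => simp [partialMonodromy]
  | cons k t ih =>
    rw [List.nodup_cons] at ht
    have hsk := hs k List.mem_cons_self
    obtain ⟨hA, hC, hD⟩ := ih ht.2 fun m hm => hs m (List.mem_cons_of_mem _ hm)
    simp only [partialMonodromy_cons_apply_mulVec, List.map_cons, List.prod_cons]
    refine ⟨?_, ?_, ?_⟩
    · rw [hA, hC, mulVec_zero, add_zero, mulVec_smul, Lop_zero_zero_mulVec_of_up hsk, smul_smul,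
        mul_comm]
    · rw [hA, hC, mulVec_zero, add_zero, mulVec_smul, Lop_one_zero_mulVec_of_up hsk, smul_zero]
    · rw [(commute_Lop_partialMonodromy ht.1 l l 1 0 0 1).mulVec_mulVec_comm,
        Lop_one_zero_mulVec_of_up hsk, mulVec_zero, zero_add, hD, mulVec_smul,
        Lop_one_one_mulVec_of_up hsk, smul_smul, mul_comm]

theorem partialMonodromy_zero_one_cons_mulVec_of_up {k : Fin N} {t : List (Fin N)}
    (ht : (k :: t).Nodup) (l : ℂ) {s : Cfg N} (hs : ∀ m ∈ k :: t, s m = 0) :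
    partialMonodromy ν (k :: t) l 0 1 *ᵥ basisVec s =
      aW l (ν k) • (partialMonodromy ν t l 0 1 *ᵥ basisVec s) +
        (t.map fun m => bW l (ν m)).prod • basisVec (update s k 1) := by
  rw [List.nodup_cons] at ht
  have hsk := hs k List.mem_cons_self
  obtain ⟨-, -, hD⟩ := partialMonodromy_mulVec_of_up (ν := ν) ht.2 l fun m hm =>
    hs m (List.mem_cons_of_mem _ hm)
  rw [partialMonodromy_cons_apply_mulVec,
    (commute_Lop_partialMonodromy ht.1 l l 0 0 0 1).mulVec_mulVec_comm,
    Lop_zero_zero_mulVec_of_up hsk, mulVec_smul, hD, mulVec_smul, Lop_zero_one_mulVec_of_up hsk]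

theorem partialMonodromy_one_zero_cons_mulVec_flip {k : Fin N} {t : List (Fin N)}
    (ht : (k :: t).Nodup) (l : ℂ) {s : Cfg N} (hs : ∀ m ∈ k :: t, s m = 0) :
    partialMonodromy ν (k :: t) l 1 0 *ᵥ basisVec (update s k 1) =
      (t.map fun m => aW l (ν m)).prod • basisVec s := by
  rw [List.nodup_cons] at ht
  have hs' : ∀ m ∈ t, update s k 1 m = 0 := fun m hm => by
    rw [update_of_ne (ne_of_mem_of_not_mem hm ht.1)]
    exact hs m (List.mem_cons_of_mem _ hm)
  obtain ⟨hA, hC, -⟩ := partialMonodromy_mulVec_of_up (ν := ν) ht.2 l hs'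
  rw [partialMonodromy_cons_apply_mulVec, hA, hC, mulVec_zero, add_zero, mulVec_smul,
    Lop_one_zero_mulVec_flip (hs k List.mem_cons_self)]

theorem partialMonodromy_one_zero_mulVec_zero_one_mulVec_of_up {t : List (Fin N)} (ht : t.Nodup)
    (l : ℂ) {s : Cfg N} (hs : ∀ k ∈ t, s k = 0) :
    partialMonodromy ν t (l + 1) 1 0 *ᵥ (partialMonodromy ν t l 0 1 *ᵥ basisVec s) =
      ((t.map fun k => aW l (ν k) ^ 2).prod -
        (t.map fun k => bW l (ν k) * aW (l + 1) (ν k)).prod) • basisVec s := by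
  induction t with
  | nil => simp [partialMonodromy]
  | cons k t ih =>
    have hsk := hs k List.mem_cons_self
    have hst : ∀ m ∈ t, s m = 0 := fun m hm => hs m (List.mem_cons_of_mem _ hm)
    have hkt := (List.nodup_cons.mp ht).1
    have hCB : partialMonodromy ν (k :: t) (l + 1) 1 0 *ᵥ
        (partialMonodromy ν t l 0 1 *ᵥ basisVec s) =
        bW (l + 1) (ν k) • ((t.map fun k => aW l (ν k) ^ 2).prod -
          (t.map fun k => bW l (ν k) * aW (l + 1) (ν k)).prod) • basisVec s := by
      rw [partialMonodromy_cons_apply_mulVec,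
        (commute_Lop_partialMonodromy hkt (l + 1) (l + 1) 1 0 0 0).mulVec_mulVec_comm,
        (commute_Lop_partialMonodromy hkt (l + 1) l 1 0 0 1).mulVec_mulVec_comm,
        Lop_one_zero_mulVec_of_up hsk, mulVec_zero, mulVec_zero, zero_add,
        ih (List.nodup_cons.mp ht).2 hst, mulVec_smul, Lop_one_one_mulVec_of_up hsk, smul_comm]
    rw [partialMonodromy_zero_one_cons_mulVec_of_up ht l hs, mulVec_add, mulVec_smul, mulVec_smul,
      hCB, partialMonodromy_one_zero_cons_mulVec_flip ht (l + 1) hs, smul_smul, smul_smul,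
      smul_smul, ← add_smul]
    congr 1
    simp only [List.map_cons, List.prod_cons]
    rw [← List.prod_map_mul]
    simp only [aW, bW]
    ring

end SixVertex

open SixVertex in
theorem Cop_Bop_vacuum_general (N : ℕ) (ν : Fin N → ℂ) (j : Fin N) :
    (Cop ν (ν j)).mulVec ((Bop ν (ν j - 1)).mulVec (upVec N)) =
      (-((∏ k, (ν j - ν k + 1)) * ∏ k, (ν j - 1 - ν k))) • upVec N := by
  have hprod (f : Fin N → ℂ) : (((List.finRange N).reverse).map f).prod = ∏ k, f k := by
    rw [List.map_reverse, List.prod_reverse, ← Fin.prod_univ_def]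
  have hCB := partialMonodromy_one_zero_mulVec_zero_one_mulVec_of_up (ν := ν)
    (List.nodup_reverse.mpr (List.nodup_finRange N)) (ν j - 1) (s := upCfg N) fun _ _ => rfl
  rw [sub_add_cancel] at hCB
  have hvanish : ∏ k, aW (ν j - 1) (ν k) ^ 2 = 0 :=
    Finset.prod_eq_zero (Finset.mem_univ j) (by simp [aW])
  rw [hprod, hprod, hvanish, zero_sub, Finset.prod_mul_distrib, mul_comm] at hCB
  exact hCB

open SixVertex in
/-- `C(ν_j) B(ν_j - 1) |⇑⟩ = - a(ν_j) d(ν_j - 1) |⇑⟩`, where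
`a(λ) = ∏_{k=1}^N (λ - ν_k + 1)` and `d(λ) = ∏_{k=1}^N (λ - ν_k)`. -/
theorem Cop_Bop_vacuum (N : ℕ) (hN : 1 ≤ N) (ν : Fin N → ℂ) (j : Fin N) :
    (Cop ν (ν j)).mulVec ((Bop ν (ν j - 1)).mulVec (upVec N)) =
      (-((∏ k, (ν j - ν k + 1)) * ∏ k, (ν j - 1 - ν k))) • upVec N :=
  Cop_Bop_vacuum_general N ν j
end

section
/- For any ν_1,…,ν_N ∈ ℂ, the partition function Z_N with rational weights is a symmetric polynomial function of λ_1,…,λ_N of degree at most N−1 in each variable: there exists a polynomial P ∈ ℂ[λ_1,…,λ_N], symmetric under all permutations of the variables and of degree at most N−1 in each λ_j, such that Z_N(λ_1,…,λ_N) = P(λ_1,…,λ_N) for all λ_1,…,λ_N ∈ ℂ. -/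
open scoped BigOperators
/-!
The construction of `Z_N` makes sense over any commutative ring and commutes with ring maps.
Taking the spectral parameters to be the variables `X j` of `ℂ[X_1, …, X_N]` gives a polynomial
`Z_N(ν, X)` whose evaluations are the values of `Z_N`.

Symmetry comes from the Yang–Baxter relation `R(u-w) (L(u) ⊗ L(w)) = (L(w) ⊗ L(u)) R(u-w)` with
`R(c) = c P + 1`, `P` the flip. Entries of L-operators at different sites commute, so it passes
to the monodromy matrix (RTT relation), whose `(↑↑, ↓↓)` entry reads
`(u - w + 1) B(u) B(w) = (u - w + 1) B(w) B(u)`. Over the polynomial ring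
`X i - X j + 1 ≠ 0` for `i ≠ j`, so the operators `B(X i)` commute and the ordered product
defining `Z_N` is invariant under permutations of the variables.

Degree: only the factor `B(X j)` involves `X j`. The diagonal blocks of an L-operator are affine
and the off-diagonal blocks constant in the spectral parameter, and `B` is an off-diagonal entry
of a product of `N` of them, so it has degree at most `N - 1`.
-/

open scoped Kronecker

namespace Matrix

lemma map_kronecker {α β l m n p F : Type*} [Mul α] [Mul β] [FunLike F α β] [MulHomClass F α β]
    (f : F) (A : Matrix l m α) (B : Matrix n p α) : (A ⊗ₖ B).map f = A.map f ⊗ₖ B.map f := by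
  ext
  simp

variable {α : Type*} [Ring α] {l m n p : Type*} [Fintype m] [Fintype p]

lemma kronecker_mul_kronecker_of_commute {l' n' : Type*} (A : Matrix l m α) (B : Matrix n p α)
    (A' : Matrix m l' α) (B' : Matrix p n' α) (h : ∀ a b c d, Commute (B a b) (A' c d)) :
    (A ⊗ₖ B) * (A' ⊗ₖ B') = (A * A') ⊗ₖ (B * B') := by
  ext ⟨i, i'⟩ ⟨j, j'⟩
  simp only [mul_apply, kronecker_apply, Fintype.sum_prod_type, Finset.sum_mul_sum]
  exact Finset.sum_congr rfl fun k _ => Finset.sum_congr rfl fun k' _ =>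
    (h i' k' k j).mul_mul_mul_comm _ _

lemma commute_list_prod_apply [DecidableEq m] (x : α) (L : List (Matrix m m α))
    (h : ∀ M ∈ L, ∀ a b, Commute x (M a b)) (a b : m) : Commute x (L.prod a b) := by
  induction L generalizing a with
  | nil =>
    rw [List.prod_nil, one_apply]
    split_ifs
    exacts [Commute.one_right x, Commute.zero_right x]
  | cons M L ih =>
    rw [List.prod_cons, mul_apply]
    exact Commute.sum_right _ _ _ fun c _ => (h M List.mem_cons_self a c).mul_right
      (ih (fun M' hM' => h M' (List.mem_cons_of_mem _ hM')) c)

lemma list_prod_kronecker_list_prod {ι : Type*} [DecidableEq m] [DecidableEq p]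
    (A : ι → Matrix m m α) (B : ι → Matrix p p α)
    (h : ∀ i j, i ≠ j → ∀ a b c d, Commute (B i a b) (A j c d)) (L : List ι) (hL : L.Nodup) :
    (L.map A).prod ⊗ₖ (L.map B).prod = (L.map fun i => A i ⊗ₖ B i).prod := by
  induction L with
  | nil => simp
  | cons i L ih =>
    obtain ⟨hi, hL⟩ := List.nodup_cons.mp hL
    simp only [List.map_cons, List.prod_cons, ← ih hL]
    refine (kronecker_mul_kronecker_of_commute _ _ _ _ fun a b c d => ?_).symm
    refine commute_list_prod_apply _ _ ?_ c d
    simp only [List.mem_map]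
    rintro _ ⟨j, hj, rfl⟩
    exact h i j (ne_of_mem_of_not_mem hj hi).symm a b

end Matrix

lemma SemiconjBy.list_prod_map {M ι : Type*} [Monoid M] {a : M} {f g : ι → M} (L : List ι)
    (h : ∀ i ∈ L, SemiconjBy a (f i) (g i)) : SemiconjBy a (L.map f).prod (L.map g).prod := by
  induction L with
  | nil => exact SemiconjBy.one_right a
  | cons i L ih =>
    simp only [List.map_cons, List.prod_cons]
    exact (h i List.mem_cons_self).mul_right (ih fun j hj => h j (List.mem_cons_of_mem _ hj))

namespace MvPolynomial

open Matrix

variable {R τ ι : Type*} [CommRing R] [Fintype ι] (j : τ)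

lemma degreeOf_matrix_mul_apply_le {A B : Matrix ι ι (MvPolynomial τ R)} {m n : ℕ}
    (hA : ∀ s t, degreeOf j (A s t) ≤ m) (hB : ∀ s t, degreeOf j (B s t) ≤ n) (s t : ι) :
    degreeOf j ((A * B) s t) ≤ m + n :=
  (degreeOf_sum_le _ _ _).trans <| Finset.sup_le fun r _ =>
    (degreeOf_mul_le _ _ _).trans (add_le_add (hA s r) (hB r t))

lemma degreeOf_list_prod_apply_le [DecidableEq ι] {κ : Type*}
    (M : κ → Matrix ι ι (MvPolynomial τ R)) (e : κ → ℕ)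
    (h : ∀ k s t, degreeOf j (M k s t) ≤ e k) (L : List κ) (s t : ι) :
    degreeOf j ((L.map M).prod s t) ≤ (L.map e).sum := by
  induction L generalizing s t with
  | nil =>
    rw [List.map_nil, List.prod_nil, one_apply]
    split_ifs <;> simp
  | cons k L ih =>
    rw [List.map_cons, List.prod_cons, List.map_cons, List.sum_cons]
    exact degreeOf_matrix_mul_apply_le j (h k) ih s t

/-- The weight `d` charged to off-diagonal blocks is subadditive along products,
as `a ≠ b` forces `a ≠ c` or `c ≠ b`. -/
lemma degreeOf_block_mul_apply_le
    {X Y : Matrix (Fin 2) (Fin 2) (Matrix ι ι (MvPolynomial τ R))} {d m n : ℕ}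
    (hX : ∀ a b s t, degreeOf j (X a b s t) + (if a = b then 0 else d) ≤ m)
    (hY : ∀ a b s t, degreeOf j (Y a b s t) + (if a = b then 0 else d) ≤ n)
    (a b : Fin 2) (s t : ι) :
    degreeOf j ((X * Y) a b s t) + (if a = b then 0 else d) ≤ m + n := by
  have hdm : d ≤ m := le_trans (by simp) (hX 0 1 s s)
  have hdn : d ≤ n := le_trans (by simp) (hY 0 1 s s)
  have hle (a c : Fin 2) : (if a = c then 0 else d) ≤ d := by split_ifs <;> omega
  have hterm (c : Fin 2) : degreeOf j ((X a c * Y c b) s t) ≤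
      (m - if a = c then 0 else d) + (n - if c = b then 0 else d) :=
    degreeOf_matrix_mul_apply_le j (fun s t => by have := hX a c s t; omega)
      (fun s t => by have := hY c b s t; omega) s t
  have hsum : degreeOf j ((X * Y) a b s t) ≤ m + n - if a = b then 0 else d := by
    rw [mul_apply, Matrix.sum_apply]
    refine (degreeOf_sum_le _ _ _).trans (Finset.sup_le fun c _ => (hterm c).trans ?_)
    have htri : (if a = b then 0 else d) ≤ (if a = c then 0 else d) + if c = b then 0 else d := by
      by_cases hac : a = c
      · simp [hac]
      · simpa [hac] using (hle a b).trans (Nat.le_add_right _ _)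
    have := hle a c
    have := hle c b
    omega
  have := hle a b
  omega

lemma degreeOf_block_list_prod_apply_le [DecidableEq ι] {d : ℕ}
    (L : List (Matrix (Fin 2) (Fin 2) (Matrix ι ι (MvPolynomial τ R)))) (hL : L ≠ [])
    (h : ∀ X ∈ L, ∀ a b s t, degreeOf j (X a b s t) + (if a = b then 0 else d) ≤ d)
    (a b : Fin 2) (s t : ι) :
    degreeOf j (L.prod a b s t) + (if a = b then 0 else d) ≤ d * L.length := by
  induction L generalizing a b s t with
  | nil => exact absurd rfl hL
  | cons X L ih =>
    rcases eq_or_ne L [] with rfl | hL'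
    · simpa using h X List.mem_cons_self a b s t
    have := degreeOf_block_mul_apply_le j (h X List.mem_cons_self)
      (ih hL' fun Y hY => h Y (List.mem_cons_of_mem _ hY)) a b s t
    rw [List.prod_cons, List.length_cons]
    linarith

end MvPolynomial

namespace SixVertex

open Matrix MvPolynomial

section Site

variable {R : Type*} [CommRing R] {N : ℕ}

def siteMat (k : Fin N) (M : Matrix (Fin 2) (Fin 2) R) : Matrix (Cfg N) (Cfg N) R :=
  Matrix.of fun s s' => if ∀ i, i ≠ k → s i = s' i then M (s k) (s' k) else 0

lemma siteMat_apply (k : Fin N) (M : Matrix (Fin 2) (Fin 2) R) (s s' : Cfg N) :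
    siteMat k M s s' = if ∀ i, i ≠ k → s i = s' i then M (s k) (s' k) else 0 := rfl

lemma siteMat_mul_apply (k : Fin N) (M : Matrix (Fin 2) (Fin 2) R)
    (X : Matrix (Cfg N) (Cfg N) R) (s s' : Cfg N) :
    (siteMat k M * X) s s' = ∑ c, M (s k) c * X (Function.update s k c) s' := by
  have hfilter : Finset.univ.filter (fun t : Cfg N => ∀ i, i ≠ k → s i = t i) =
      Finset.univ.image (Function.update s k) := by
    ext t
    simp only [Finset.mem_filter, Finset.mem_univ, true_and, Finset.mem_image]
    refine ⟨fun h => ⟨t k, funext fun i => ?_⟩, ?_⟩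
    · by_cases hi : i = k
      · subst hi; simp
      · rw [Function.update_of_ne hi, h i hi]
    · rintro ⟨c, rfl⟩ i hi
      rw [Function.update_of_ne hi]
  simp_rw [mul_apply, siteMat_apply, ite_mul, zero_mul]
  rw [← Finset.sum_filter, hfilter, Finset.sum_image fun _ _ _ _ h => Function.update_injective s k h]
  simp

lemma siteMat_mul (k : Fin N) (M M' : Matrix (Fin 2) (Fin 2) R) :
    siteMat k (M * M') = siteMat k M * siteMat k M' := by
  ext s s'
  simp_rw [siteMat_mul_apply, siteMat_apply, Function.update_self]
  have hcond (c : Fin 2) : (∀ i, i ≠ k → Function.update s k c i = s' i) ↔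
      ∀ i, i ≠ k → s i = s' i :=
    forall₂_congr fun i hi => by rw [Function.update_of_ne hi]
  simp_rw [hcond, mul_ite, mul_zero, Finset.sum_ite_irrel, Finset.sum_const_zero, mul_apply]

lemma siteMat_one (k : Fin N) : siteMat k (1 : Matrix (Fin 2) (Fin 2) R) = 1 := by
  ext s s'
  have hiff : ((∀ i, i ≠ k → s i = s' i) ∧ s k = s' k) ↔ s = s' := by
    refine ⟨fun h => funext fun i => ?_, fun h => by simp [h]⟩
    by_cases hi : i = k
    · exact hi ▸ h.2
    · exact h.1 i hi
  simp only [siteMat_apply, one_apply, ← hiff, ite_and]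

def siteHom (k : Fin N) : Matrix (Fin 2) (Fin 2) R →ₐ[R] Matrix (Cfg N) (Cfg N) R :=
  AlgHom.ofLinearMap
    { toFun := siteMat k
      map_add' := fun M M' => by ext; simp only [siteMat_apply, Matrix.add_apply]; split_ifs <;> simp
      map_smul' := fun c M => by ext; simp [siteMat_apply] }
    (siteMat_one k) (siteMat_mul k)

lemma siteHom_apply (k : Fin N) (M : Matrix (Fin 2) (Fin 2) R) : siteHom k M = siteMat k M := rfl

lemma siteMat_mul_siteMat_apply {j k : Fin N} (h : j ≠ k) (M M' : Matrix (Fin 2) (Fin 2) R)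
    (s s' : Cfg N) :
    (siteMat j M * siteMat k M') s s' =
      if ∀ i, i ≠ j → i ≠ k → s i = s' i then M (s j) (s' j) * M' (s k) (s' k) else 0 := by
  rw [siteMat_mul_apply, Finset.sum_eq_single (s' j)]
  · have hcond : (∀ i, i ≠ k → Function.update s j (s' j) i = s' i) ↔
        ∀ i, i ≠ j → i ≠ k → s i = s' i := by
      refine forall_congr' fun i => ?_
      by_cases hi : i = j
      · subst hi; simp
      · simp [hi]
    rw [siteMat_apply, Function.update_of_ne h.symm, mul_ite, mul_zero]
    exact if_congr hcond rfl rfl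
  · intro c _ hc
    rw [siteMat_apply, if_neg, mul_zero]
    exact fun hupd => hc (by simpa using hupd j h)
  · simp

lemma siteMat_commute {j k : Fin N} (h : j ≠ k) (M M' : Matrix (Fin 2) (Fin 2) R) :
    Commute (siteMat j M) (siteMat k M') := by
  ext s s'
  have hcond : (∀ i, i ≠ j → i ≠ k → s i = s' i) ↔ ∀ i, i ≠ k → i ≠ j → s i = s' i :=
    forall_congr' fun _ => imp.swap
  rw [siteMat_mul_siteMat_apply h, siteMat_mul_siteMat_apply h.symm]
  exact if_congr hcond (mul_comm _ _) rfl

lemma siteMat_map {S : Type*} [CommRing S] (φ : R →+* S) (k : Fin N)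
    (M : Matrix (Fin 2) (Fin 2) R) : (siteMat k M).map φ = siteMat k (M.map φ) := by
  ext s s'
  simp only [map_apply, siteMat_apply, apply_ite φ, map_zero]

end Site

section Chain

variable {R S : Type*} [CommRing R] [CommRing S] {N : ℕ}

def localL (u v : R) : Matrix (Fin 2) (Fin 2) (Matrix (Fin 2) (Fin 2) R) :=
  !![!![u - v + 1, 0; 0, u - v], !![0, 0; 1, 0];
     !![0, 1; 0, 0], !![u - v, 0; 0, u - v + 1]]

def laxOp (ν : Fin N → R) (k : Fin N) (u : R) : Matrix (Fin 2) (Fin 2) (Matrix (Cfg N) (Cfg N) R) :=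
  (localL u (ν k)).map (siteHom k)

def monodromyOf (ν : Fin N → R) (l : List (Fin N)) (u : R) :
    Matrix (Fin 2) (Fin 2) (Matrix (Cfg N) (Cfg N) R) :=
  (l.map fun k => laxOp ν k u).prod

def bOp (ν : Fin N → R) (u : R) : Matrix (Cfg N) (Cfg N) R :=
  monodromyOf ν (List.finRange N).reverse u 0 1

def partitionFn (ν lam : Fin N → R) : R :=
  ((List.finRange N).reverse.map fun j => bOp ν (lam j)).prod (downCfg N) (upCfg N)

lemma Lop_eq_laxOp (ν : Fin N → ℂ) (k : Fin N) (l : ℂ) : Lop ν k l = laxOp ν k l := by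
  have hlocal : localL l (ν k) =
      !![aW l (ν k) • piPlus + bW l (ν k) • piMinus, sigmaMinus;
         sigmaPlus, bW l (ν k) • piPlus + aW l (ν k) • piMinus] := by
    ext a b i j
    fin_cases a <;> fin_cases b <;> fin_cases i <;> fin_cases j <;>
      simp [localL, piPlus, piMinus, sigmaPlus, sigmaMinus, aW, bW]
  have hsite (M : Matrix (Fin 2) (Fin 2) ℂ) : siteOp k M = siteHom k M := rfl
  simp only [laxOp, hlocal, Lop, hsite, ← map_smul, ← map_add]
  refine Matrix.ext fun a b => ?_
  fin_cases a <;> fin_cases b <;> rfl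

lemma Zfun_eq_partitionFn (ν lam : Fin N → ℂ) : Zfun N ν lam = partitionFn ν lam := by
  simp only [Zfun, partitionFn, bOp, Bop, monodromy, monodromyOf, Lop_eq_laxOp]

lemma localL_map (φ : R →+* S) (u v : R) :
    (localL u v).map (·.map φ) = localL (φ u) (φ v) := by
  ext a b i j
  fin_cases a <;> fin_cases b <;> fin_cases i <;> fin_cases j <;> simp [localL]

lemma laxOp_map (φ : R →+* S) (ν : Fin N → R) (k : Fin N) (u : R) :
    (laxOp ν k u).map φ.mapMatrix = laxOp (φ ∘ ν) k (φ u) := by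
  refine Matrix.ext fun a b => ?_
  simp only [laxOp, map_apply, RingHom.mapMatrix_apply, siteHom_apply, siteMat_map,
    ← localL_map φ, Function.comp_apply]

lemma monodromyOf_map (φ : R →+* S) (ν : Fin N → R) (l : List (Fin N)) (u : R) :
    φ.mapMatrix.mapMatrix (monodromyOf ν l u) = monodromyOf (φ ∘ ν) l (φ u) := by
  simp only [monodromyOf, map_list_prod, List.map_map]
  congr 1
  exact List.map_congr_left fun k _ => laxOp_map φ ν k u

lemma bOp_map (φ : R →+* S) (ν : Fin N → R) (u : R) :
    (bOp ν u).map φ = bOp (φ ∘ ν) (φ u) := by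
  rw [bOp, bOp, ← monodromyOf_map]
  rfl

lemma map_partitionFn (φ : R →+* S) (ν lam : Fin N → R) :
    φ (partitionFn ν lam) = partitionFn (φ ∘ ν) (φ ∘ lam) := by
  have h := congrArg (· (downCfg N) (upCfg N))
    (map_list_prod φ.mapMatrix ((List.finRange N).reverse.map fun j => bOp ν (lam j)))
  simpa [partitionFn, List.map_map, Function.comp_def, bOp_map] using h

end Chain

section YangBaxter

variable {R α : Type*} [CommRing R] [Ring α] [Algebra R α]

def rMatrix (c : R) : Matrix (Fin 2 × Fin 2) (Fin 2 × Fin 2) α :=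
  c • (Equiv.prodComm (Fin 2) (Fin 2)).toPEquiv.toMatrix + 1

lemma rMatrix_mul_apply (c : R) (K : Matrix (Fin 2 × Fin 2) (Fin 2 × Fin 2) α)
    (p q : Fin 2 × Fin 2) : ((rMatrix c : Matrix _ _ α) * K) p q = c • K p.swap q + K p q := by
  simp [rMatrix, add_mul, PEquiv.toMatrix_toPEquiv_mul]

lemma mul_rMatrix_apply (c : R) (K : Matrix (Fin 2 × Fin 2) (Fin 2 × Fin 2) α)
    (p q : Fin 2 × Fin 2) : (K * (rMatrix c : Matrix _ _ α)) p q = c • K p q.swap + K p q := by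
  simp [rMatrix, mul_add, PEquiv.mul_toMatrix_toPEquiv]

lemma rMatrix_map {β : Type*} [Ring β] [Algebra R β] (f : α →ₐ[R] β) (c : R) :
    (rMatrix c).map f = rMatrix (α := β) c := by
  ext p q
  simp [rMatrix, map_apply, Matrix.smul_apply, PEquiv.toMatrix_apply, one_apply, apply_ite f]

lemma semiconjBy_rMatrix_localL (u w v : R) :
    SemiconjBy (rMatrix (u - w)) (localL u v ⊗ₖ localL w v) (localL w v ⊗ₖ localL u v) := by
  refine Matrix.ext fun p q => ?_
  rw [rMatrix_mul_apply, mul_rMatrix_apply]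
  obtain ⟨a, a'⟩ := p
  obtain ⟨b, b'⟩ := q
  ext i j
  fin_cases a <;> fin_cases a' <;> fin_cases b <;> fin_cases b' <;> fin_cases i <;> fin_cases j <;>
    simp [localL] <;> ring

variable {N : ℕ}

lemma semiconjBy_rMatrix_laxOp (ν : Fin N → R) (k : Fin N) (u w : R) :
    SemiconjBy (rMatrix (u - w)) (laxOp ν k u ⊗ₖ laxOp ν k w) (laxOp ν k w ⊗ₖ laxOp ν k u) := by
  simpa only [AlgHom.mapMatrix_apply, map_kronecker, rMatrix_map, laxOp] using
    (semiconjBy_rMatrix_localL u w (ν k)).map (siteHom (N := N) k).mapMatrix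

lemma semiconjBy_rMatrix_monodromyOf (ν : Fin N → R) {l : List (Fin N)} (hl : l.Nodup)
    (u w : R) :
    SemiconjBy (rMatrix (u - w)) (monodromyOf ν l u ⊗ₖ monodromyOf ν l w)
      (monodromyOf ν l w ⊗ₖ monodromyOf ν l u) := by
  have hcomm (x y : R) (i j : Fin N) (hij : i ≠ j) (a b c d : Fin 2) :
      Commute (laxOp ν i x a b) (laxOp ν j y c d) :=
    siteMat_commute hij _ _
  simp only [monodromyOf]
  rw [list_prod_kronecker_list_prod _ _ (hcomm w u) l hl,
    list_prod_kronecker_list_prod _ _ (hcomm u w) l hl]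
  exact SemiconjBy.list_prod_map l fun k _ => semiconjBy_rMatrix_laxOp ν k u w

lemma smul_bOp_mul_bOp (ν : Fin N → R) (u w : R) :
    (u - w + 1) • (bOp ν u * bOp ν w) = (u - w + 1) • (bOp ν w * bOp ν u) := by
  have h := congrFun₂ (semiconjBy_rMatrix_monodromyOf ν
    (List.nodup_reverse.2 (List.nodup_finRange N)) u w) (0, 0) (1, 1)
  simp only [rMatrix_mul_apply, mul_rMatrix_apply, Prod.swap_prod_mk, kronecker_apply] at h
  simpa only [add_smul, one_smul, bOp] using h

lemma bOp_commute [IsDomain R] (ν : Fin N → R) {u w : R} (h : u - w + 1 ≠ 0) :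
    Commute (bOp ν u) (bOp ν w) :=
  smul_right_injective _ h (smul_bOp_mul_bOp ν u w)

lemma partitionFn_comp_perm [IsDomain R] (ν lam : Fin N → R)
    (h : ∀ i j, i ≠ j → lam i - lam j + 1 ≠ 0) (σ : Equiv.Perm (Fin N)) :
    partitionFn ν (lam ∘ σ) = partitionFn ν lam := by
  have hperm : ((List.finRange N).reverse.map σ).Perm (List.finRange N).reverse := by
    rw [List.map_reverse]
    exact (List.reverse_perm _).trans (σ.map_finRange_perm.trans (List.reverse_perm _).symm)
  have hnodup : ((List.finRange N).reverse.map σ).Nodup :=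
    (List.nodup_reverse.2 (List.nodup_finRange N)).map σ.injective
  have hprod := (hperm.map fun j => bOp ν (lam j)).prod_eq'
    (List.pairwise_map.2 (hnodup.imp fun hij => bOp_commute ν (h _ _ hij)))
  simp only [partitionFn, ← hprod, List.map_map]
  rfl

end YangBaxter

section ChainDegree

variable {R τ : Type*} [CommRing R] {N : ℕ} (j : τ)

lemma degreeOf_laxOp_apply_le {ν : Fin N → MvPolynomial τ R} {k : Fin N}
    {u : MvPolynomial τ R} {d : ℕ} (h : degreeOf j (u - ν k) ≤ d) (a b : Fin 2) (s t : Cfg N) :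
    degreeOf j (laxOp ν k u a b s t) + (if a = b then 0 else d) ≤ d := by
  have h1 : degreeOf j (u - ν k + 1) ≤ d :=
    (degreeOf_add_le _ _ _).trans (max_le h (by simp))
  rw [laxOp, map_apply, siteHom_apply, siteMat_apply]
  by_cases hst : ∀ i, i ≠ k → s i = t i
  · rw [if_pos hst]
    generalize s k = x
    generalize t k = y
    fin_cases a <;> fin_cases b <;> fin_cases x <;> fin_cases y <;> simp [localL, h, h1]
  · rw [if_neg hst]
    split_ifs <;> simp

lemma degreeOf_bOp_apply_le {ν : Fin N → MvPolynomial τ R} {u : MvPolynomial τ R} {d : ℕ}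
    (h : ∀ k, degreeOf j (u - ν k) ≤ d) (s t : Cfg N) :
    degreeOf j (bOp ν u s t) ≤ d * (N - 1) := by
  rcases Nat.eq_zero_or_pos N with rfl | hN
  · simp [bOp, monodromyOf]
  have := degreeOf_block_list_prod_apply_le j ((List.finRange N).reverse.map (laxOp ν · u))
    (by simp [hN.ne']) (by simpa using fun k => degreeOf_laxOp_apply_le j (h k)) 0 1 s t
  simp only [List.length_map, List.length_reverse, List.length_finRange,
    if_neg (by decide : (0 : Fin 2) ≠ 1)] at this
  rw [bOp, monodromyOf, Nat.mul_sub_one]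
  omega

lemma degreeOf_partitionFn_le {ν lam : Fin N → MvPolynomial τ R} (d : Fin N → ℕ)
    (h : ∀ i k, degreeOf j (lam i - ν k) ≤ d i) :
    degreeOf j (partitionFn ν lam) ≤ (∑ i, d i) * (N - 1) := by
  refine (degreeOf_list_prod_apply_le j (fun i => bOp ν (lam i)) (fun i => d i * (N - 1))
    (fun i => degreeOf_bOp_apply_le j (h i)) _ (downCfg N) (upCfg N)).trans_eq ?_
  rw [List.map_reverse, List.sum_reverse, ← Fin.sum_univ_def, Finset.sum_mul]

end ChainDegree

section Polynomial

variable {R : Type*} [CommRing R] {N : ℕ}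

noncomputable def partitionPoly (ν : Fin N → R) : MvPolynomial (Fin N) R :=
  partitionFn (fun k => C (ν k)) X

lemma eval_partitionPoly (ν lam : Fin N → R) : eval lam (partitionPoly ν) = partitionFn ν lam := by
  simp [partitionPoly, map_partitionFn, Function.comp_def]

lemma partitionPoly_isSymmetric [IsDomain R] (ν : Fin N → R) : (partitionPoly ν).IsSymmetric := by
  intro σ
  have hX : ∀ i j, i ≠ j → (X i - X j + 1 : MvPolynomial (Fin N) R) ≠ 0 := fun i j _ h0 =>
    one_ne_zero (α := R) (by simpa using congrArg (eval (0 : Fin N → R)) h0)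
  have := map_partitionFn (rename σ).toRingHom (fun k => C (ν k)) X
  simp only [AlgHom.toRingHom_eq_coe, RingHom.coe_coe] at this
  rw [partitionPoly, this]
  simpa [Function.comp_def] using partitionFn_comp_perm _ _ hX σ

lemma degreeOf_partitionPoly_le [Nontrivial R] (ν : Fin N → R) (j : Fin N) :
    degreeOf j (partitionPoly ν) ≤ N - 1 := by
  have := degreeOf_partitionFn_le j (ν := fun k => C (ν k)) (lam := X)
    (fun i => if i = j then 1 else 0) fun i k =>
      (degreeOf_sub_le _ _ _).trans (by simp [degreeOf_X, eq_comm])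
  simpa [partitionPoly] using this

end Polynomial

end SixVertex

open SixVertex in
theorem Zfun_symmetric_polynomial_general (N : ℕ) (ν : Fin N → ℂ) :
    ∃ P : MvPolynomial (Fin N) ℂ,
      P.IsSymmetric ∧
      (∀ j : Fin N, P.degreeOf j ≤ N - 1) ∧
      ∀ lam : Fin N → ℂ, MvPolynomial.eval lam P = Zfun N ν lam :=
  ⟨partitionPoly ν, partitionPoly_isSymmetric ν, degreeOf_partitionPoly_le ν, fun lam => by
    rw [eval_partitionPoly, Zfun_eq_partitionFn]⟩

open SixVertex in
/-- the partition function `Z_N` is (the evaluation of) a symmetric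
polynomial in `λ_1,…,λ_N` of degree at most `N-1` in each variable. -/
theorem Zfun_symmetric_polynomial (N : ℕ) (hN : 1 ≤ N) (ν : Fin N → ℂ) :
    ∃ P : MvPolynomial (Fin N) ℂ,
      P.IsSymmetric ∧
      (∀ j : Fin N, P.degreeOf j ≤ N - 1) ∧
      ∀ lam : Fin N → ℂ, MvPolynomial.eval lam P = Zfun N ν lam :=
  Zfun_symmetric_polynomial_general N ν
end
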